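/- arXiv:1602.04015 — 2 statements merged into one kernel-verified Lean document; each statement's English description precedes it below -/
import Mathlib

section
/- If K is finite-dimensional and T is a closed densely-defined operator from H to K, then the operator Ṫ := (I + T*T)^{-1/2} T* is a bounded operator from K to H with ‖Ṫ‖ < 1, i.e. it belongs to the open unit ball of L(K,H). -/
/-!
Because `T` is closed, `(0, u)` lies in the double orthogonal of the graph of `T` whenever `u` is
orthogonal to the domain of `T†`; hence that domain is dense, and being finite dimensional it is
all of `K`. For `y ≠ 0` put `v = T† y` and `p = B v`, so `v = p + T† T p`. Then
`‖R v‖² = re ⟪v, p⟫ = ‖p‖² + ‖T p‖²`, while also `⟪v, p⟫ = ⟪y, T p⟫ ≤ ‖y‖ ‖T p‖`; together these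
force `‖R v‖ < ‖y‖`. Compactness of the unit sphere of `K` turns this pointwise strict bound into
`‖Ṫ‖ < 1`.
-/

open scoped InnerProductSpace
open RCLike

namespace LinearPMap

variable {𝕜 E F : Type*} [RCLike 𝕜] [NormedAddCommGroup E] [InnerProductSpace 𝕜 E]
  [NormedAddCommGroup F] [InnerProductSpace 𝕜 F] [CompleteSpace E] {T : E →ₗ.[𝕜] F}

theorem neg_snd_mem_adjoint_domain_of_mem_orthogonal_graph {w : WithLp 2 (E × F)}
    (hw : w ∈ (T.graph.comap (WithLp.linearEquiv 2 𝕜 (E × F)).toLinearMap)ᗮ) :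
    -w.snd ∈ T†.domain := by
  refine mem_adjoint_domain_of_exists _ ⟨w.fst, fun x => ?_⟩
  have h := Submodule.inner_left_of_mem_orthogonal (T.mem_graph x) hw
  rw [WithLp.prod_inner_apply] at h
  rwa [inner_neg_left, eq_neg_iff_add_eq_zero]

theorem orthogonal_adjoint_domain_eq_bot [CompleteSpace F] (hT : T.IsClosed) :
    (T†.domain)ᗮ = ⊥ := by
  set G := T.graph.comap (WithLp.linearEquiv 2 𝕜 (E × F)).toLinearMap
  have hG : Gᗮᗮ = G := by
    rw [Submodule.orthogonal_orthogonal_eq_closure]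
    exact (hT.preimage (WithLp.prod_continuous_ofLp 2 E F)).submodule_topologicalClosure_eq
  refine (Submodule.eq_bot_iff _).mpr fun u hu => ?_
  have hu' : WithLp.toLp 2 ((0 : E), u) ∈ Gᗮᗮ := fun w hw => by
    have h := Submodule.inner_right_of_mem_orthogonal
      (neg_snd_mem_adjoint_domain_of_mem_orthogonal_graph hw) hu
    rw [inner_neg_left, neg_eq_zero] at h
    simpa [WithLp.prod_inner_apply] using h
  rw [hG] at hu'
  exact T.graph_fst_eq_zero_snd hu' rfl

theorem adjoint_domain_eq_top_of_finiteDimensional [FiniteDimensional 𝕜 F] (hT : T.IsClosed) :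
    T†.domain = ⊤ := by
  have : CompleteSpace F := FiniteDimensional.complete 𝕜 F
  rw [← (Submodule.closed_of_finiteDimensional T†.domain).submodule_topologicalClosure_eq,
    Submodule.topologicalClosure_eq_top_iff]
  exact orthogonal_adjoint_domain_eq_bot hT

theorem re_inner_add_adjoint_apply_self (hT : Dense (T.domain : Set E)) (p : T.domain)
    (hp : T p ∈ T†.domain) :
    re ⟪(p : E) + T† ⟨T p, hp⟩, p⟫_𝕜 = ‖(p : E)‖ ^ 2 + ‖T p‖ ^ 2 := by
  rw [inner_add_left, adjoint_isFormalAdjoint hT ⟨T p, hp⟩ p, re.map_add, inner_self_eq_norm_sq,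
    inner_self_eq_norm_sq]

theorem norm_sqrt_inv_apply_adjoint_apply_lt (hT : Dense (T.domain : Set E))
    {B R : E →L[𝕜] E}
    (hBinv₁ : ∀ p : {p : T.domain // T p ∈ T†.domain}, B ((p.1 : E) + T† ⟨T p.1, p.2⟩) = p.1)
    (hBinv₂ : ∀ v : E, ∃ p : {p : T.domain // T p ∈ T†.domain}, (p.1 : E) + T† ⟨T p.1, p.2⟩ = v)
    (hR : IsSelfAdjoint R) (hRsq : R * R = B) {y : F} (hy : y ∈ T†.domain) (hy0 : y ≠ 0) :
    ‖R (T† ⟨y, hy⟩)‖ < ‖y‖ := by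
  set v := T† ⟨y, hy⟩
  obtain ⟨⟨p, hp⟩, hpv⟩ := hBinv₂ v
  have hnorm : ‖R v‖ ^ 2 = re ⟪v, (p : E)⟫_𝕜 := by
    rw [R.apply_norm_sq_eq_inner_adjoint_right, hR.adjoint_eq, ← ContinuousLinearMap.mul_def,
      hRsq, ← hpv, hBinv₁ ⟨p, hp⟩]
  have hsq : ‖R v‖ ^ 2 = ‖(p : E)‖ ^ 2 + ‖T p‖ ^ 2 := by
    rw [hnorm, ← hpv, re_inner_add_adjoint_apply_self hT p hp]
  have hle : ‖R v‖ ^ 2 ≤ ‖y‖ * ‖T p‖ := by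
    rw [hnorm, adjoint_isFormalAdjoint hT ⟨y, hy⟩ p]
    exact re_inner_le_norm _ _
  have hy_pos := norm_pos_iff.mpr hy0
  rcases eq_or_ne p 0 with rfl | hp0
  · have : ‖R v‖ = 0 := by simpa using hsq
    rwa [this]
  · have hp_pos : 0 < ‖(p : E)‖ := norm_pos_iff.mpr (by simpa using hp0)
    by_contra! hge
    nlinarith [mul_le_mul_of_nonneg_right hge (norm_nonneg (T p)), sq_nonneg (‖R v‖ - ‖T p‖)]

end LinearPMap

namespace ContinuousLinearMap

variable {𝕜 E F : Type*} [RCLike 𝕜] [NormedAddCommGroup E] [NormedSpace 𝕜 E]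
  [NormedAddCommGroup F] [NormedSpace 𝕜 F] [FiniteDimensional 𝕜 E]

theorem opNorm_lt_one_of_norm_apply_lt (A : E →L[𝕜] F) (hA : ∀ x ≠ 0, ‖A x‖ < ‖x‖) :
    ‖A‖ < 1 := by
  have : ProperSpace E := FiniteDimensional.proper_rclike 𝕜 E
  rcases subsingleton_or_nontrivial E with hE | hE
  · simp [Subsingleton.elim A 0]
  obtain ⟨x₀, hx₀, hmax⟩ := (isCompact_sphere (0 : E) 1).exists_isMaxOn
    (Set.nonempty_coe_sort.mp (NormedSpace.sphere_nonempty_rclike 𝕜 zero_le_one))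
    (continuous_norm.comp A.continuous).continuousOn
  rw [mem_sphere_zero_iff_norm] at hx₀
  calc ‖A‖ ≤ ‖A x₀‖ := opNorm_le_of_unit_norm (norm_nonneg _) fun x hx =>
        hmax (mem_sphere_zero_iff_norm.mpr hx)
    _ < 1 := hx₀ ▸ hA x₀ (ne_zero_of_norm_ne_zero (by simp [hx₀]))

end ContinuousLinearMap

open LinearPMap

theorem hat_mem_open_unit_ball_of_finiteDimensional_general
    {H K : Type*} [NormedAddCommGroup H] [InnerProductSpace ℂ H] [CompleteSpace H]
    [NormedAddCommGroup K] [InnerProductSpace ℂ K]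
    [FiniteDimensional ℂ K]
    (T : H →ₗ.[ℂ] K) (hdense : Dense (T.domain : Set H)) (hclosed : T.IsClosed)
    (B R : H →L[ℂ] H)
    (hBinv₁ : ∀ p : {p : T.domain // T p ∈ T.adjoint.domain},
      B ((p.1 : H) + T.adjoint ⟨T p.1, p.2⟩) = (p.1 : H))
    (hBinv₂ : ∀ y : H, ∃ p : {p : T.domain // T p ∈ T.adjoint.domain},
      (p.1 : H) + T.adjoint ⟨T p.1, p.2⟩ = y)
    (hR : R.IsPositive) (hRsq : R * R = B) :
    T.adjoint.domain = ⊤ ∧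
    ∃ A : K →L[ℂ] H, ‖A‖ < 1 ∧
      ∀ y : K, ∀ hy : y ∈ T.adjoint.domain, A y = R (T.adjoint ⟨y, hy⟩) := by
  have htop : T.adjoint.domain = ⊤ := adjoint_domain_eq_top_of_finiteDimensional hclosed
  let A : K →L[ℂ] H := LinearMap.toContinuousLinearMap
    (R.toLinearMap ∘ₗ T.adjoint.toFun ∘ₗ (LinearEquiv.ofTop _ htop).symm.toLinearMap)
  refine ⟨htop, A, A.opNorm_lt_one_of_norm_apply_lt fun y hy0 => ?_, fun y hy => rfl⟩
  exact norm_sqrt_inv_apply_adjoint_apply_lt hdense hBinv₁ hBinv₂ hR.isSelfAdjoint hRsq _ hy0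

/-- Let `K` be finite dimensional and `T : H → K` closed and densely
defined. With `B = (I + T*T)^{-1}` and `R = (I + T*T)^{-1/2}` its positive square root,
the operator `Ṫ = (I + T*T)^{-1/2} T*` is (everywhere defined and) a bounded operator
`A : K → H` with `‖A‖ < 1`, i.e. it belongs to the open unit ball of `L(K,H)`. -/
theorem hat_mem_open_unit_ball_of_finiteDimensional
    {H K : Type*} [NormedAddCommGroup H] [InnerProductSpace ℂ H] [CompleteSpace H]
    [NormedAddCommGroup K] [InnerProductSpace ℂ K] [CompleteSpace K]
    [FiniteDimensional ℂ K]
    (T : H →ₗ.[ℂ] K) (hdense : Dense (T.domain : Set H)) (hclosed : T.IsClosed)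
    (B R : H →L[ℂ] H) (hB : B.IsPositive)
    (hBinv₁ : ∀ p : {p : T.domain // T p ∈ T.adjoint.domain},
      B ((p.1 : H) + T.adjoint ⟨T p.1, p.2⟩) = (p.1 : H))
    (hBinv₂ : ∀ y : H, ∃ p : {p : T.domain // T p ∈ T.adjoint.domain},
      (p.1 : H) + T.adjoint ⟨T p.1, p.2⟩ = y)
    (hR : R.IsPositive) (hRsq : R * R = B) :
    T.adjoint.domain = ⊤ ∧
    ∃ A : K →L[ℂ] H, ‖A‖ < 1 ∧
      ∀ y : K, ∀ hy : y ∈ T.adjoint.domain, A y = R (T.adjoint ⟨y, hy⟩) :=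
  hat_mem_open_unit_ball_of_finiteDimensional_general T hdense hclosed B R hBinv₁ hBinv₂ hR hRsq
end

section
/- In the metric space (C(H,K), d), the distance from any X to -X satisfies d(X, -X) = 2 d(X, 0). -/
/-- `artanh x = ½ log((1+x)/(1-x))`, the inverse hyperbolic tangent. -/
noncomputable def artanh (x : ℝ) : ℝ := (1 / 2) * Real.log ((1 + x) / (1 - x))

/-- The Poincaré distance `ω(a,b) = tanh⁻¹ (|a-b| / |1 - āb|)` on the open unit disc. -/
noncomputable def poincareDist (a b : ℂ) : ℝ :=
  artanh (‖a - b‖ / ‖1 - (starRingEnd ℂ) a * b‖)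

variable {X : Type*} [NormedAddCommGroup X] [NormedSpace ℂ X]

/-- An analytic chain joining `x` and `y` in the open unit ball of a complex Banach
space `X`: holomorphic maps `f 0, …, f n` from the unit disc into the ball, together with
points `z i, w i` of the disc, such that `f 0 (z 0) = x`, `f n (w n) = y` and
`f i (w i) = f (i+1) (z (i+1))`. -/
structure AnalyticChain (x y : X) where
  n : ℕ
  f : Fin (n + 1) → ℂ → X
  z : Fin (n + 1) → ℂ
  w : Fin (n + 1) → ℂ
  holo : ∀ i, DifferentiableOn ℂ (f i) (Metric.ball 0 1)
  maps : ∀ i, ∀ c ∈ Metric.ball (0 : ℂ) 1, f i c ∈ Metric.ball (0 : X) 1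
  z_mem : ∀ i, z i ∈ Metric.ball (0 : ℂ) 1
  w_mem : ∀ i, w i ∈ Metric.ball (0 : ℂ) 1
  first : f 0 (z 0) = x
  last : f (Fin.last n) (w (Fin.last n)) = y
  link : ∀ i : Fin n, f i.castSucc (w i.castSucc) = f i.succ (z i.succ)

/-- The length `∑ ω(zᵢ, wᵢ)` of an analytic chain. -/
noncomputable def AnalyticChain.length {x y : X} (c : AnalyticChain x y) : ℝ :=
  ∑ i, poincareDist (c.z i) (c.w i)

/-- The Kobayashi (pseudo-)distance on the open unit ball of `X`: the infimum of lengths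
of analytic chains joining `x` and `y`. -/
noncomputable def kobayashiDist (x y : X) : ℝ :=
  sInf (Set.range fun c : AnalyticChain x y => c.length)

section ClosedDenseOperators

variable {H K : Type*} [NormedAddCommGroup H] [InnerProductSpace ℂ H] [CompleteSpace H]
  [NormedAddCommGroup K] [InnerProductSpace ℂ K] [CompleteSpace K]

/-- `C(H,K)`: the closed densely-defined linear operators from `H` to `K`. -/
def ClosedDenseOp (H K : Type*) [NormedAddCommGroup H] [InnerProductSpace ℂ H]
    [NormedAddCommGroup K] [InnerProductSpace ℂ K] : Type _ :=
  {T : H →ₗ.[ℂ] K // Dense (T.domain : Set H) ∧ T.IsClosed}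

/-- `IsHat T A` says that the bounded operator `A : K → H` is
`Ṫ = (I + T*T)^{-1/2} T*`:  there are bounded positive operators `B` and `R` on `H` such
that `B` is the (everywhere defined) inverse of `I + T*T`, `R` is the positive square root
of `B` (so `R = (I + T*T)^{-1/2}`), the adjoint `T*` is everywhere defined, `‖A‖ < 1`
and `A y = R (T* y)` for all `y`. -/
def IsHat (T : H →ₗ.[ℂ] K) (A : K →L[ℂ] H) : Prop :=
  ∃ B R : H →L[ℂ] H, B.IsPositive ∧
    (∀ p : {p : T.domain // T p ∈ T.adjoint.domain},
      B ((p.1 : H) + T.adjoint ⟨T p.1, p.2⟩) = (p.1 : H)) ∧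
    (∀ y : H, ∃ p : {p : T.domain // T p ∈ T.adjoint.domain},
      (p.1 : H) + T.adjoint ⟨T p.1, p.2⟩ = y) ∧
    R.IsPositive ∧ R * R = B ∧
    T.adjoint.domain = ⊤ ∧ ‖A‖ < 1 ∧
    ∀ y : K, ∀ hy : y ∈ T.adjoint.domain, A y = R (T.adjoint ⟨y, hy⟩)

end ClosedDenseOperators

/-!
The hat of `-X` is `-Ẋ`, because `(-X)*(-X) = X*X`; so the claim is
`K_B(A, -A) = 2 K_B(A, 0)` for a point `A` of the open unit ball of the Banach space `K →L[ℂ] H`.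
For a unit vector `u`, the complex line `z ↦ z • u` is a one-disc chain, so
`K_B(p • u, q • u) ≤ ω(p, q)`; conversely a norming functional `g` of `u` turns every analytic
chain into a chain of holomorphic self-maps of the disc, and the Schwarz–Pick lemma together
with the triangle inequality for `ω` bound its length below by `ω(g x, g y)`.
With `A = ‖A‖ • u` this gives `K_B(A, -A) = ω(t, -t) = 2 tanh⁻¹ t` and `K_B(A, 0) = tanh⁻¹ t`
for `t = ‖A‖`, the first by `tanh⁻¹ (2t / (1 + t²)) = 2 tanh⁻¹ t`.
-/

open scoped ComplexConjugate
open Metric Set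

theorem artanh_eq_real_artanh {x : ℝ} (hx : x ∈ Icc (-1) 1) : artanh x = Real.artanh x :=
  (Real.artanh_eq_half_log hx).symm

theorem artanh_le_artanh {x y : ℝ} (hx : -1 < x) (hy : y < 1) (hxy : x ≤ y) :
    artanh x ≤ artanh y := by
  rw [artanh_eq_real_artanh ⟨hx.le, by linarith⟩, artanh_eq_real_artanh ⟨by linarith, hy.le⟩]
  exact Real.artanh_le_artanh hx hy hxy

theorem artanh_add_artanh {u v : ℝ} (hu : u ∈ Ioo (-1) 1) (hv : v ∈ Ioo (-1) 1) :
    artanh u + artanh v = artanh ((u + v) / (1 + u * v)) := by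
  obtain ⟨hu₁, hu₂⟩ := hu
  obtain ⟨hv₁, hv₂⟩ := hv
  have huv : 0 < 1 + u * v := by nlinarith
  have hu' : 1 - u ≠ 0 := by linarith
  have hv' : 1 - v ≠ 0 := by linarith
  have huv' : 1 + u * v - (u + v) ≠ 0 := by nlinarith
  have hquot : (1 + (u + v) / (1 + u * v)) / (1 - (u + v) / (1 + u * v))
      = (1 + u) / (1 - u) * ((1 + v) / (1 - v)) := by
    field_simp
    ring
  rw [artanh, artanh, artanh, hquot, Real.log_mul (div_ne_zero (by linarith) hu')
    (div_ne_zero (by linarith) hv')]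
  ring

noncomputable def pseudoHyperbolic (a b : ℂ) : ℝ :=
  ‖a - b‖ / ‖1 - conj a * b‖

theorem poincareDist_eq_artanh_pseudoHyperbolic (a b : ℂ) :
    poincareDist a b = artanh (pseudoHyperbolic a b) := rfl

theorem sq_norm_one_sub_conj_mul_sub_sq_norm_sub (a b : ℂ) :
    ‖1 - conj a * b‖ ^ 2 - ‖a - b‖ ^ 2 = (1 - ‖a‖ ^ 2) * (1 - ‖b‖ ^ 2) := by
  simp only [Complex.sq_norm, Complex.normSq_apply, Complex.sub_re, Complex.sub_im,
    Complex.one_re, Complex.one_im, Complex.mul_re, Complex.mul_im, Complex.conj_re,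
    Complex.conj_im]
  ring

theorem norm_sub_lt_norm_one_sub_conj_mul {a b : ℂ} (ha : ‖a‖ < 1) (hb : ‖b‖ < 1) :
    ‖a - b‖ < ‖1 - conj a * b‖ := by
  have h := sq_norm_one_sub_conj_mul_sub_sq_norm_sub a b
  have hpos : 0 < (1 - ‖a‖ ^ 2) * (1 - ‖b‖ ^ 2) := by
    apply mul_pos <;> nlinarith [norm_nonneg a, norm_nonneg b]
  exact lt_of_pow_lt_pow_left₀ 2 (norm_nonneg _) (by linarith)

theorem norm_one_sub_conj_mul_pos {a b : ℂ} (ha : ‖a‖ < 1) (hb : ‖b‖ < 1) :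
    0 < ‖1 - conj a * b‖ :=
  (norm_nonneg _).trans_lt (norm_sub_lt_norm_one_sub_conj_mul ha hb)

theorem pseudoHyperbolic_nonneg (a b : ℂ) : 0 ≤ pseudoHyperbolic a b := by
  unfold pseudoHyperbolic
  positivity

theorem pseudoHyperbolic_lt_one {a b : ℂ} (ha : ‖a‖ < 1) (hb : ‖b‖ < 1) :
    pseudoHyperbolic a b < 1 :=
  (div_lt_one (norm_one_sub_conj_mul_pos ha hb)).2 (norm_sub_lt_norm_one_sub_conj_mul ha hb)

theorem pseudoHyperbolic_mem_Ioo {a b : ℂ} (ha : ‖a‖ < 1) (hb : ‖b‖ < 1) :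
    pseudoHyperbolic a b ∈ Ioo (-1) 1 :=
  ⟨by linarith [pseudoHyperbolic_nonneg a b], pseudoHyperbolic_lt_one ha hb⟩

theorem pseudoHyperbolic_comm (a b : ℂ) : pseudoHyperbolic a b = pseudoHyperbolic b a := by
  rw [pseudoHyperbolic, pseudoHyperbolic, norm_sub_rev, ← Complex.norm_conj (1 - conj b * a)]
  simp [mul_comm]

theorem pseudoHyperbolic_le_norm_add_norm_div {x y : ℂ} (hx : ‖x‖ < 1) (hy : ‖y‖ < 1) :
    pseudoHyperbolic x y ≤ (‖x‖ + ‖y‖) / (1 + ‖x‖ * ‖y‖) := by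
  have hD := norm_one_sub_conj_mul_pos hx hy
  have hD_le : ‖1 - conj x * y‖ ≤ 1 + ‖x‖ * ‖y‖ := by
    simpa using norm_sub_le (1 : ℂ) (conj x * y)
  have key := sq_norm_one_sub_conj_mul_sub_sq_norm_sub x y
  have hx0 := norm_nonneg x
  have hy0 := norm_nonneg y
  have hfac : 0 ≤ (1 - ‖x‖ ^ 2) * (1 - ‖y‖ ^ 2) := by
    apply mul_nonneg <;> nlinarith
  rw [pseudoHyperbolic, div_le_div_iff₀ hD (by positivity)]
  -- `(1 + rs)² - (r + s)² = (1 - r²)(1 - s²)` and `|1 - x̄y| ≤ 1 + rs`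
  refine le_of_pow_le_pow_left₀ two_ne_zero (by positivity) ?_
  nlinarith [mul_le_mul_of_nonneg_left (pow_le_pow_left₀ hD.le hD_le 2) hfac]

/-- The involutive automorphism of the unit disc exchanging `c` and `0`. -/
noncomputable def mobius (c z : ℂ) : ℂ := (c - z) / (1 - conj c * z)

theorem norm_mobius (c z : ℂ) : ‖mobius c z‖ = pseudoHyperbolic c z := by
  rw [mobius, norm_div, pseudoHyperbolic]

theorem norm_mobius_lt_one {c z : ℂ} (hc : ‖c‖ < 1) (hz : ‖z‖ < 1) : ‖mobius c z‖ < 1 := by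
  rw [norm_mobius]
  exact pseudoHyperbolic_lt_one hc hz

theorem mobius_self (c : ℂ) : mobius c c = 0 := by simp [mobius]

theorem mobius_zero (c : ℂ) : mobius c 0 = c := by simp [mobius]

theorem mobius_mobius {c z : ℂ} (hc : ‖c‖ < 1) (hz : ‖z‖ < 1) : mobius c (mobius c z) = z := by
  have hcz := (norm_one_sub_conj_mul_pos hc hz).ne'
  have hcc := (norm_one_sub_conj_mul_pos hc hc).ne'
  rw [norm_ne_zero_iff] at hcz hcc
  have hzc : 1 - z * conj c ≠ 0 := by rwa [mul_comm]
  have hnum : c - (c - z) / (1 - conj c * z) = z * (1 - conj c * c) / (1 - conj c * z) := by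
    field_simp
    ring
  have hden : 1 - conj c * ((c - z) / (1 - conj c * z)) = (1 - conj c * c) / (1 - conj c * z) := by
    field_simp
    ring
  rw [mobius, mobius, hnum, hden, mul_div_assoc]
  exact mul_div_cancel_right₀ z (div_ne_zero hcc hcz)

theorem mapsTo_mobius {c : ℂ} (hc : ‖c‖ < 1) : MapsTo (mobius c) (ball 0 1) (ball 0 1) :=
  fun _ hz ↦ mem_ball_zero_iff.2 (norm_mobius_lt_one hc (mem_ball_zero_iff.1 hz))

theorem differentiableOn_mobius {c : ℂ} (hc : ‖c‖ < 1) :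
    DifferentiableOn ℂ (mobius c) (ball 0 1) :=
  ((differentiableOn_const c).sub differentiableOn_id).div
    ((differentiableOn_const 1).sub ((differentiableOn_const _).mul differentiableOn_id))
    fun _ hz ↦ norm_ne_zero_iff.1 (norm_one_sub_conj_mul_pos hc (mem_ball_zero_iff.1 hz)).ne'

theorem pseudoHyperbolic_le_of_mapsTo {h : ℂ → ℂ} (hd : DifferentiableOn ℂ h (ball 0 1))
    (hm : MapsTo h (ball 0 1) (ball 0 1)) {a b : ℂ} (ha : ‖a‖ < 1) (hb : ‖b‖ < 1) :
    pseudoHyperbolic (h a) (h b) ≤ pseudoHyperbolic a b := by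
  have hha : ‖h a‖ < 1 := mem_ball_zero_iff.1 (hm (mem_ball_zero_iff.2 ha))
  -- Schwarz's lemma for `mobius (h a) ∘ h ∘ mobius a`, which fixes `0`
  have hd' : DifferentiableOn ℂ (mobius (h a) ∘ h ∘ mobius a) (ball 0 1) :=
    (differentiableOn_mobius hha).comp (hd.comp (differentiableOn_mobius ha) (mapsTo_mobius ha))
      (hm.comp (mapsTo_mobius ha))
  have hm' : MapsTo (mobius (h a) ∘ h ∘ mobius a) (ball 0 1) (closedBall 0 1) :=
    ((mapsTo_mobius hha).comp (hm.comp (mapsTo_mobius ha))).mono_right ball_subset_closedBall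
  have h₀ : (mobius (h a) ∘ h ∘ mobius a) 0 = 0 := by
    simp only [Function.comp_apply, mobius_zero, mobius_self]
  have := Complex.norm_le_norm_of_mapsTo_ball hd' hm' h₀ (norm_mobius_lt_one ha hb)
  rwa [Function.comp_apply, Function.comp_apply, mobius_mobius ha hb, norm_mobius,
    norm_mobius] at this

theorem poincareDist_le_of_mapsTo {h : ℂ → ℂ} (hd : DifferentiableOn ℂ h (ball 0 1))
    (hm : MapsTo h (ball 0 1) (ball 0 1)) {a b : ℂ} (ha : ‖a‖ < 1) (hb : ‖b‖ < 1) :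
    poincareDist (h a) (h b) ≤ poincareDist a b :=
  artanh_le_artanh (neg_one_lt_zero.trans_le (pseudoHyperbolic_nonneg (h a) (h b)))
    (pseudoHyperbolic_lt_one ha hb) (pseudoHyperbolic_le_of_mapsTo hd hm ha hb)

theorem pseudoHyperbolic_triangle {a b c : ℂ} (ha : ‖a‖ < 1) (hb : ‖b‖ < 1) (hc : ‖c‖ < 1) :
    pseudoHyperbolic a c ≤
      (pseudoHyperbolic a b + pseudoHyperbolic b c) /
        (1 + pseudoHyperbolic a b * pseudoHyperbolic b c) := by
  -- move `b` to the origin; the involution `mobius b` does not decrease `pseudoHyperbolic`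
  calc pseudoHyperbolic a c
      = pseudoHyperbolic (mobius b (mobius b a)) (mobius b (mobius b c)) := by
        rw [mobius_mobius hb ha, mobius_mobius hb hc]
    _ ≤ pseudoHyperbolic (mobius b a) (mobius b c) :=
        pseudoHyperbolic_le_of_mapsTo (differentiableOn_mobius hb) (mapsTo_mobius hb)
          (norm_mobius_lt_one hb ha) (norm_mobius_lt_one hb hc)
    _ ≤ (‖mobius b a‖ + ‖mobius b c‖) / (1 + ‖mobius b a‖ * ‖mobius b c‖) :=
        pseudoHyperbolic_le_norm_add_norm_div (norm_mobius_lt_one hb ha) (norm_mobius_lt_one hb hc)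
    _ = _ := by rw [norm_mobius, norm_mobius, pseudoHyperbolic_comm b a]

theorem poincareDist_nonneg {a b : ℂ} (ha : ‖a‖ < 1) (hb : ‖b‖ < 1) : 0 ≤ poincareDist a b := by
  rw [poincareDist_eq_artanh_pseudoHyperbolic,
    artanh_eq_real_artanh (Ioo_subset_Icc_self (pseudoHyperbolic_mem_Ioo ha hb))]
  exact Real.artanh_nonneg (pseudoHyperbolic_nonneg a b)

theorem poincareDist_triangle {a b c : ℂ} (ha : ‖a‖ < 1) (hb : ‖b‖ < 1) (hc : ‖c‖ < 1) :
    poincareDist a c ≤ poincareDist a b + poincareDist b c := by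
  have hab := pseudoHyperbolic_mem_Ioo ha hb
  have hbc := pseudoHyperbolic_mem_Ioo hb hc
  rw [poincareDist_eq_artanh_pseudoHyperbolic, poincareDist_eq_artanh_pseudoHyperbolic,
    poincareDist_eq_artanh_pseudoHyperbolic, artanh_add_artanh hab hbc]
  refine artanh_le_artanh (neg_one_lt_zero.trans_le (pseudoHyperbolic_nonneg a c)) ?_
    (pseudoHyperbolic_triangle ha hb hc)
  rw [div_lt_one (by nlinarith [hab.1, hbc.1, hab.2, hbc.2])]
  nlinarith [hab.2, hbc.2]

theorem poincareDist_le_sum_of_chain (n : ℕ) (a b : Fin (n + 1) → ℂ) (ha : ∀ i, ‖a i‖ < 1)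
    (hb : ∀ i, ‖b i‖ < 1) (hlink : ∀ i : Fin n, b i.castSucc = a i.succ) :
    poincareDist (a 0) (b (Fin.last n)) ≤ ∑ i, poincareDist (a i) (b i) := by
  induction n with
  | zero => simp
  | succ n ih =>
    have hprev := ih (a ∘ Fin.castSucc) (b ∘ Fin.castSucc) (fun i ↦ ha _) (fun i ↦ hb _)
      (fun i ↦ hlink i.castSucc)
    rw [Fin.sum_univ_castSucc]
    simp only [Function.comp_apply, Fin.castSucc_zero, hlink (Fin.last n), Fin.succ_last] at hprev
    linarith [poincareDist_triangle (ha 0) (ha (Fin.last (n + 1))) (hb (Fin.last (n + 1)))]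

theorem poincareDist_zero_right (z : ℂ) : poincareDist z 0 = artanh ‖z‖ := by
  simp [poincareDist]

theorem poincareDist_neg_right {z : ℂ} (hz : ‖z‖ < 1) : poincareDist z (-z) = 2 * artanh ‖z‖ := by
  have hden : 1 - conj z * -z = ((1 + ‖z‖ * ‖z‖ : ℝ) : ℂ) := by
    push_cast
    rw [mul_neg, Complex.conj_mul', sub_neg_eq_add, sq]
  have hz' : ‖z‖ ∈ Ioo (-1) 1 := ⟨by linarith [norm_nonneg z], hz⟩
  rw [two_mul, artanh_add_artanh hz' hz', poincareDist, hden, Complex.norm_real,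
    Real.norm_of_nonneg (by positivity), sub_neg_eq_add, ← two_mul, norm_mul, Complex.norm_two,
    two_mul]

namespace AnalyticChain

theorem length_nonneg {x y : X} (c : AnalyticChain x y) : 0 ≤ c.length :=
  Finset.sum_nonneg fun i _ ↦
    poincareDist_nonneg (mem_ball_zero_iff.1 (c.z_mem i)) (mem_ball_zero_iff.1 (c.w_mem i))

noncomputable def ofDisc (f : ℂ → X) (hf : DifferentiableOn ℂ f (ball 0 1))
    (hmaps : MapsTo f (ball 0 1) (ball 0 1)) {p q : ℂ} (hp : p ∈ ball (0 : ℂ) 1)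
    (hq : q ∈ ball (0 : ℂ) 1) : AnalyticChain (f p) (f q) where
  n := 0
  f _ := f
  z _ := p
  w _ := q
  holo _ := hf
  maps _ := hmaps
  z_mem _ := hp
  w_mem _ := hq
  first := rfl
  last := rfl
  link i := i.elim0

theorem length_ofDisc (f : ℂ → X) (hf : DifferentiableOn ℂ f (ball 0 1))
    (hmaps : MapsTo f (ball 0 1) (ball 0 1)) {p q : ℂ} (hp : p ∈ ball (0 : ℂ) 1)
    (hq : q ∈ ball (0 : ℂ) 1) : (ofDisc f hf hmaps hp hq).length = poincareDist p q :=
  Fin.sum_univ_one _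

theorem poincareDist_le_length (g : StrongDual ℂ X) (hg : ‖g‖ ≤ 1) {x y : X}
    (c : AnalyticChain x y) : poincareDist (g x) (g y) ≤ c.length := by
  have hg_maps : MapsTo g (ball 0 1) (ball 0 1) := fun v hv ↦ by
    rw [mem_ball_zero_iff] at hv ⊢
    exact (g.le_opNorm v).trans_lt (by nlinarith [norm_nonneg v, norm_nonneg g])
  have hmaps i : MapsTo (g ∘ c.f i) (ball 0 1) (ball 0 1) := hg_maps.comp (c.maps i)
  have hnorm i {t : ℂ} (ht : t ∈ ball (0 : ℂ) 1) : ‖g (c.f i t)‖ < 1 :=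
    mem_ball_zero_iff.1 (hmaps i ht)
  have hchain := poincareDist_le_sum_of_chain c.n (fun i ↦ g (c.f i (c.z i)))
    (fun i ↦ g (c.f i (c.w i))) (fun i ↦ hnorm i (c.z_mem i)) (fun i ↦ hnorm i (c.w_mem i))
    fun i ↦ congrArg g (c.link i)
  rw [c.first, c.last] at hchain
  refine hchain.trans (Finset.sum_le_sum fun i _ ↦ ?_)
  exact poincareDist_le_of_mapsTo (g.differentiable.comp_differentiableOn (c.holo i)) (hmaps i)
    (mem_ball_zero_iff.1 (c.z_mem i)) (mem_ball_zero_iff.1 (c.w_mem i))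

end AnalyticChain

theorem kobayashiDist_le_length {x y : X} (c : AnalyticChain x y) : kobayashiDist x y ≤ c.length :=
  csInf_le ⟨0, by rintro _ ⟨c, rfl⟩; exact c.length_nonneg⟩ ⟨c, rfl⟩

theorem kobayashiDist_le_poincareDist (f : ℂ → X) (hf : DifferentiableOn ℂ f (ball 0 1))
    (hmaps : MapsTo f (ball 0 1) (ball 0 1)) {p q : ℂ} (hp : p ∈ ball (0 : ℂ) 1)
    (hq : q ∈ ball (0 : ℂ) 1) : kobayashiDist (f p) (f q) ≤ poincareDist p q :=
  AnalyticChain.length_ofDisc f hf hmaps hp hq ▸ kobayashiDist_le_length _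

theorem poincareDist_le_kobayashiDist (g : StrongDual ℂ X) (hg : ‖g‖ ≤ 1) {x y : X}
    (c : AnalyticChain x y) : poincareDist (g x) (g y) ≤ kobayashiDist x y :=
  le_csInf ⟨c.length, c, rfl⟩ (by rintro _ ⟨c, rfl⟩; exact c.poincareDist_le_length g hg)

theorem kobayashiDist_nonneg {x y : X} (c : AnalyticChain x y) : 0 ≤ kobayashiDist x y :=
  le_csInf ⟨c.length, c, rfl⟩ (by rintro _ ⟨c, rfl⟩; exact c.length_nonneg)

theorem kobayashiDist_self {x : X} (hx : x ∈ ball (0 : X) 1) : kobayashiDist x x = 0 := by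
  have h0 : (0 : ℂ) ∈ ball (0 : ℂ) 1 := mem_ball_self one_pos
  refine le_antisymm ?_ (kobayashiDist_nonneg
    (AnalyticChain.ofDisc (fun _ ↦ x) (differentiableOn_const x) (fun _ _ ↦ hx) h0 h0))
  simpa [poincareDist_zero_right, artanh] using
    kobayashiDist_le_poincareDist (fun _ ↦ x) (differentiableOn_const x) (fun _ _ ↦ hx) h0 h0

theorem kobayashiDist_smul_smul {u : X} (hu : ‖u‖ = 1) {p q : ℂ} (hp : ‖p‖ < 1) (hq : ‖q‖ < 1) :
    kobayashiDist (p • u) (q • u) = poincareDist p q := by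
  have hmaps : MapsTo (· • u) (ball (0 : ℂ) 1) (ball (0 : X) 1) := fun t ht ↦ by
    simpa [norm_smul, hu] using ht
  have hp' : p ∈ ball (0 : ℂ) 1 := mem_ball_zero_iff.2 hp
  have hq' : q ∈ ball (0 : ℂ) 1 := mem_ball_zero_iff.2 hq
  obtain ⟨g, hg_norm, hgu⟩ := exists_dual_vector ℂ u (by simp [hu])
  refine le_antisymm
    (kobayashiDist_le_poincareDist (· • u) (differentiableOn_id.smul_const u) hmaps hp' hq') ?_
  simpa [hgu, hu] using poincareDist_le_kobayashiDist g hg_norm.le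
    (AnalyticChain.ofDisc _ (differentiableOn_id.smul_const u) hmaps hp' hq')

theorem kobayashiDist_neg_eq_two_mul_kobayashiDist_zero {x : X} (hx : ‖x‖ < 1) :
    kobayashiDist x (-x) = 2 * kobayashiDist x 0 := by
  rcases eq_or_ne x 0 with rfl | hx0
  · rw [neg_zero, kobayashiDist_self (mem_ball_self one_pos), mul_zero]
  set u : X := (‖x‖ : ℂ)⁻¹ • x
  have hu : ‖u‖ = 1 := norm_smul_inv_norm hx0
  have hxu : (‖x‖ : ℂ) • u = x := by simp [u, smul_smul, hx0]
  have hp : ‖(‖x‖ : ℂ)‖ < 1 := by simpa using hx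
  rw [← hxu, ← neg_smul, ← zero_smul ℂ u, kobayashiDist_smul_smul hu hp (by simpa using hp),
    kobayashiDist_smul_smul hu hp (by simp), poincareDist_neg_right hp, poincareDist_zero_right]

namespace LinearPMap

variable {𝕜 E F : Type*} [RCLike 𝕜] [NormedAddCommGroup E] [InnerProductSpace 𝕜 E]
  [CompleteSpace E] [NormedAddCommGroup F] [InnerProductSpace 𝕜 F]

theorem adjoint_domain_neg (T : E →ₗ.[𝕜] F) : (-T).adjoint.domain = T.adjoint.domain := by
  ext y
  change Continuous ((innerₛₗ 𝕜 y).comp (-T.toFun)) ↔ Continuous ((innerₛₗ 𝕜 y).comp T.toFun)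
  rw [LinearMap.comp_neg, LinearMap.coe_neg, continuous_neg_iff]

theorem adjoint_neg_apply (T : E →ₗ.[𝕜] F) {y : F} (hy : y ∈ (-T).adjoint.domain)
    (hy' : y ∈ T.adjoint.domain) : (-T).adjoint ⟨y, hy⟩ = -T.adjoint ⟨y, hy'⟩ := by
  by_cases hT : Dense (T.domain : Set E)
  · refine adjoint_apply_eq (T := -T) hT _ fun x ↦ ?_
    rw [neg_apply, inner_neg_left, inner_neg_right, adjoint_isFormalAdjoint hT ⟨y, hy'⟩ x]
  · rw [adjoint_apply_of_not_dense (T := -T) hT, adjoint_apply_of_not_dense hT, neg_zero]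

end LinearPMap

namespace IsHat

variable {H K : Type*} [NormedAddCommGroup H] [InnerProductSpace ℂ H] [CompleteSpace H]
  [NormedAddCommGroup K] [InnerProductSpace ℂ K] {T : H →ₗ.[ℂ] K} {A A' : K →L[ℂ] H}

theorem unique (h : IsHat T A) (h' : IsHat T A') : A = A' := by
  obtain ⟨B, R, -, hBinv, hBsurj, hR, hRB, hdom, -, hA⟩ := h
  obtain ⟨B', R', -, hBinv', -, hR', hRB', -, -, hA'⟩ := h'
  have hB : B = B' := by
    ext y
    obtain ⟨p, rfl⟩ := hBsurj y
    rw [hBinv, hBinv']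
  have hR : R = R' := by
    rw [← CFC.sqrt_unique hRB ((R.nonneg_iff_isPositive).2 hR),
      ← CFC.sqrt_unique hRB' ((R'.nonneg_iff_isPositive).2 hR'), hB]
  ext y
  have hy : y ∈ T.adjoint.domain := hdom ▸ Submodule.mem_top
  rw [hA y hy, hA' y hy, hR]

theorem neg (h : IsHat T A) : IsHat (-T) (-A) := by
  obtain ⟨B, R, hB, hBinv, hBsurj, hR, hRB, hdom, hnorm, hA⟩ := h
  have hdom' : (-T).adjoint.domain = ⊤ := (T.adjoint_domain_neg).trans hdom
  have hmem (y : K) : y ∈ T.adjoint.domain := hdom ▸ Submodule.mem_top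
  have hmem' (y : K) : y ∈ (-T).adjoint.domain := hdom' ▸ Submodule.mem_top
  have hsq (x : T.domain) : (-T).adjoint ⟨(-T) x, hmem' _⟩ = T.adjoint ⟨T x, hmem _⟩ := by
    rw [T.adjoint_neg_apply _ (hmem _), neg_eq_iff_eq_neg, ← LinearPMap.map_neg]
    rfl
  refine ⟨B, R, hB, fun p ↦ ?_, fun y ↦ ?_, hR, hRB, hdom', by rwa [norm_neg], fun y hy ↦ ?_⟩
  · rw [hsq]
    exact hBinv ⟨p.1, hmem _⟩
  · obtain ⟨p, hp⟩ := hBsurj y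
    exact ⟨⟨p.1, hmem' _⟩, by rw [hsq]; exact hp⟩
  · rw [neg_apply, hA y (hmem y), T.adjoint_neg_apply hy (hmem y), map_neg]

end IsHat

/-- `A` and `A'` are the hats of `X` and `-X`; the hat of the zero operator is `0`. -/
theorem dist_neg_self_eq_two_mul_dist_zero_general
    {H K : Type*} [NormedAddCommGroup H] [InnerProductSpace ℂ H] [CompleteSpace H]
    [NormedAddCommGroup K] [InnerProductSpace ℂ K]
    (X : H →ₗ.[ℂ] K)
    (A A' : K →L[ℂ] H) (hA : IsHat X A) (hA' : IsHat (-X) A') :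
    kobayashiDist A A' = 2 * kobayashiDist A (0 : K →L[ℂ] H) := by
  obtain rfl : A' = -A := hA'.unique hA.neg
  obtain ⟨-, -, -, -, -, -, -, -, hnorm, -⟩ := hA
  exact kobayashiDist_neg_eq_two_mul_kobayashiDist_zero hnorm

/-- In the metric space `(C(H,K), d)` (with `K` finite dimensional and
`d(T,S) = K_B(Ṫ,Ṡ)`), every `X` satisfies `d(X, -X) = 2 d(X, 0)`.  Here `A = X̂` and
`A' = (-X)^` are the hats of `X` and `-X`, and the hat of the zero operator is `0`. -/
theorem dist_neg_self_eq_two_mul_dist_zero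
    {H K : Type*} [NormedAddCommGroup H] [InnerProductSpace ℂ H] [CompleteSpace H]
    [NormedAddCommGroup K] [InnerProductSpace ℂ K] [CompleteSpace K]
    [FiniteDimensional ℂ K]
    (X : H →ₗ.[ℂ] K) (hdense : Dense (X.domain : Set H)) (hclosed : X.IsClosed)
    (A A' : K →L[ℂ] H) (hA : IsHat X A) (hA' : IsHat (-X) A') :
    kobayashiDist A A' = 2 * kobayashiDist A (0 : K →L[ℂ] H) :=
  dist_neg_self_eq_two_mul_dist_zero_general X A A' hA hA'
end
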